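/- arXiv:1404.6791 — 4 statements merged into one kernel-verified Lean document; each statement's English description precedes it below -/
import Mathlib

section
/- Fix β > 0 and t > 0, and let E_β denote the Mittag-Leffler function. Then limsup_{θ → ∞} (log log E_β(θ t)) / (log θ) ≤ 1/β. -/
/-- The Mittag-Leffler function with parameter `β`: `E_β(z) = ∑ n, z^n / Γ(nβ + 1)`. -/
noncomputable def mittagLeffler (β z : ℝ) : ℝ := ∑' n : ℕ, z ^ n / Real.Gamma (n * β + 1)

/-!
With `w = z^(1/β)` the `n`-th term of `E_β(z)` is `w^x / Γ(x + 1)` for `x = nβ`. Comparing with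
the `⌊x⌋`-th term of `exp (2w)` bounds it by `4 w exp (2w) 2^(-x)`, so summing a geometric series
gives `log E_β(z) = O(z^(1/β))`, i.e. `log log E_β(θt) ≤ (1/β) log θ + O(1)`.
-/

open Real Filter Topology
open scoped Nat

lemma factorial_floor_le_two_mul_Gamma {x : ℝ} (hx : 0 ≤ x) : (⌊x⌋₊ ! : ℝ) ≤ 2 * Gamma (x + 1) := by
  rcases lt_or_ge x 1 with hx1 | hx1
  · have hΓ : Gamma 2 ≤ Gamma (x + 2) :=
      Gamma_strictMonoOn_Ici.monotoneOn (by simp) (by simp [hx]) (by linarith)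
    rw [Gamma_two, show x + 2 = (x + 1) + 1 by ring, Gamma_add_one (by linarith)] at hΓ
    rw [Nat.floor_eq_zero.mpr hx1, Nat.factorial_zero, Nat.cast_one]
    nlinarith [Gamma_pos_of_pos (show 0 < x + 1 by linarith)]
  · rw [← Gamma_nat_eq_factorial]
    have hfloor : (⌊x⌋₊ : ℝ) ≤ x := Nat.floor_le hx
    have hfloor₁ : (1 : ℝ) ≤ ⌊x⌋₊ := by exact_mod_cast Nat.le_floor (by simpa using hx1)
    have hΓ : Gamma (⌊x⌋₊ + 1) ≤ Gamma (x + 1) :=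
      Gamma_strictMonoOn_Ici.monotoneOn (by simp; linarith) (by simp; linarith) (by linarith)
    linarith [Gamma_pos_of_pos (show 0 < x + 1 by linarith)]

lemma rpow_div_Gamma_le {w x : ℝ} (hw : 1 ≤ w) (hx : 0 ≤ x) :
    w ^ x / Gamma (x + 1) ≤ 4 * w * exp (2 * w) * 2 ^ (-x) := by
  set k := ⌊x⌋₊
  have hk : x < k + 1 := Nat.lt_floor_add_one x
  have hpow : w ^ x ≤ w ^ (k + 1) := by
    rw [← rpow_natCast]; exact rpow_le_rpow_of_exponent_le hw (by push_cast; linarith)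
  have hexp : (2 * w) ^ k / k ! ≤ exp (2 * w) := pow_div_factorial_le_exp _ (by linarith) k
  have htwo : ((2 : ℝ) ^ k)⁻¹ ≤ 2 * 2 ^ (-x) := by
    rw [← rpow_natCast, ← rpow_neg zero_le_two]
    calc (2 : ℝ) ^ (-(k : ℝ)) ≤ 2 ^ (1 + -x) := rpow_le_rpow_of_exponent_le one_le_two (by linarith)
      _ = 2 * 2 ^ (-x) := by rw [rpow_add two_pos, rpow_one]
  calc w ^ x / Gamma (x + 1) ≤ w ^ (k + 1) / (k ! / 2) :=
        div_le_div₀ (by positivity) hpow (by positivity)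
          (by linarith [factorial_floor_le_two_mul_Gamma hx])
    _ = 2 * w * ((2 * w) ^ k / k !) * ((2 : ℝ) ^ k)⁻¹ := by
        field_simp; ring
    _ ≤ 2 * w * exp (2 * w) * (2 * 2 ^ (-x)) := by gcongr
    _ = 4 * w * exp (2 * w) * 2 ^ (-x) := by ring

section MittagLeffler

variable {β z : ℝ}

lemma mittagLeffler_term_nonneg (hβ : 0 ≤ β) (hz : 0 ≤ z) (n : ℕ) :
    0 ≤ z ^ n / Gamma (n * β + 1) :=
  div_nonneg (by positivity) (Gamma_pos_of_pos (by positivity)).le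

lemma mittagLeffler_term_le (hβ : 0 < β) (hz : 1 ≤ z) (n : ℕ) :
    z ^ n / Gamma (n * β + 1) ≤ 4 * z ^ β⁻¹ * exp (2 * z ^ β⁻¹) * (2 ^ (-β)) ^ n := by
  have hw : 1 ≤ z ^ β⁻¹ := one_le_rpow hz (by positivity)
  have hzn : z ^ n = (z ^ β⁻¹) ^ (n * β) := by
    rw [← rpow_mul (by linarith), ← rpow_natCast]; congr 1; field_simp
  have h2n : (2 : ℝ) ^ (-(n * β)) = (2 ^ (-β)) ^ n := by
    rw [← rpow_natCast, ← rpow_mul zero_le_two]; ring_nf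
  rw [hzn, ← h2n]
  exact rpow_div_Gamma_le hw (by positivity)

lemma hasSum_mittagLeffler_majorant (hβ : 0 < β) (C : ℝ) :
    HasSum (fun n : ℕ => C * ((2 : ℝ) ^ (-β)) ^ n) (C * (1 - 2 ^ (-β))⁻¹) :=
  (hasSum_geometric_of_lt_one (by positivity)
    (rpow_lt_one_of_one_lt_of_neg one_lt_two (by linarith))).mul_left C

lemma summable_mittagLeffler (hβ : 0 < β) (hz : 1 ≤ z) :
    Summable fun n : ℕ => z ^ n / Gamma (n * β + 1) :=
  (hasSum_mittagLeffler_majorant hβ _).summable.of_nonneg_of_le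
    (mittagLeffler_term_nonneg hβ.le (by linarith)) (mittagLeffler_term_le hβ hz)

lemma mittagLeffler_le (hβ : 0 < β) (hz : 1 ≤ z) :
    mittagLeffler β z ≤ 4 * z ^ β⁻¹ * exp (2 * z ^ β⁻¹) * (1 - 2 ^ (-β))⁻¹ :=
  hasSum_le (mittagLeffler_term_le hβ hz) (summable_mittagLeffler hβ hz).hasSum
    (hasSum_mittagLeffler_majorant hβ _)

lemma div_Gamma_le_mittagLeffler (hβ : 0 < β) (hz : 1 ≤ z) :
    z / Gamma (β + 1) ≤ mittagLeffler β z := by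
  simpa [mittagLeffler] using (summable_mittagLeffler hβ hz).le_tsum 1
    fun n _ => mittagLeffler_term_nonneg hβ.le (by linarith) n

lemma tendsto_mittagLeffler_atTop (hβ : 0 < β) : Tendsto (mittagLeffler β) atTop atTop :=
  tendsto_atTop_mono' _ ((eventually_ge_atTop 1).mono fun _ hz => div_Gamma_le_mittagLeffler hβ hz)
    (tendsto_id.atTop_div_const (Gamma_pos_of_pos (by linarith)))

lemma exists_log_mittagLeffler_le (hβ : 0 < β) :
    ∃ C > 0, ∀ z ≥ 1, log (mittagLeffler β z) ≤ C * z ^ β⁻¹ := by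
  set A : ℝ := 4 * (1 - 2 ^ (-β))⁻¹
  have hA : 0 < A := by
    have hr : (2 : ℝ) ^ (-β) < 1 := rpow_lt_one_of_one_lt_of_neg one_lt_two (by linarith)
    have hr' : 0 < 1 - (2 : ℝ) ^ (-β) := by linarith
    positivity
  refine ⟨A + 3, by linarith, fun z hz => ?_⟩
  set w := z ^ β⁻¹
  have hw : 1 ≤ w := one_le_rpow hz (by positivity)
  have hE : 0 < mittagLeffler β z :=
    lt_of_lt_of_le (div_pos (by linarith) (Gamma_pos_of_pos (by linarith)))
      (div_Gamma_le_mittagLeffler hβ hz)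
  calc log (mittagLeffler β z) ≤ log (A * w * exp (2 * w)) := by
        refine log_le_log hE ((mittagLeffler_le hβ hz).trans_eq ?_); ring
    _ = log A + log w + 2 * w := by
        rw [log_mul (by positivity) (exp_pos _).ne', log_mul hA.ne' (by positivity), log_exp]
    _ ≤ A * w + w + 2 * w := by
        gcongr
        · exact (log_le_self hA.le).trans (le_mul_of_one_le_right hA.le hw)
        · exact log_le_self (by linarith)
    _ = (A + 3) * w := by ring

lemma exists_log_log_mittagLeffler_le (hβ : 0 < β) :
    ∃ C, ∀ᶠ z in atTop, log (log (mittagLeffler β z)) ≤ β⁻¹ * log z + C := by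
  obtain ⟨C, hC, hlog⟩ := exists_log_mittagLeffler_le hβ
  refine ⟨log C, ?_⟩
  filter_upwards [eventually_ge_atTop 1,
    (tendsto_log_atTop.comp (tendsto_mittagLeffler_atTop hβ)).eventually_gt_atTop 0] with z hz hE
  calc log (log (mittagLeffler β z)) ≤ log (C * z ^ β⁻¹) := log_le_log hE (hlog z hz)
    _ = β⁻¹ * log z + log C := by
        rw [log_mul hC.ne' (by positivity), log_rpow (by linarith)]; ring

lemma log_log_mittagLeffler_nonneg (hβ : 0 < β) :
    ∀ᶠ z in atTop, 0 ≤ log (log (mittagLeffler β z)) :=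
  (tendsto_log_atTop.comp <| tendsto_log_atTop.comp
    (tendsto_mittagLeffler_atTop hβ)).eventually_ge_atTop 0

end MittagLeffler

lemma limsup_div_log_le {f : ℝ → ℝ} {a b : ℝ} (hf₀ : ∀ᶠ θ in atTop, 0 ≤ f θ)
    (hf : ∀ᶠ θ in atTop, f θ ≤ a * log θ + b) :
    limsup (fun θ => f θ / log θ) atTop ≤ a := by
  have hlim : Tendsto (fun θ => a + b * (log θ)⁻¹) atTop (𝓝 a) := by
    simpa using (tendsto_log_atTop.inv_tendsto_atTop.const_mul b).const_add a
  rw [← hlim.limsup_eq]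
  refine limsup_le_limsup ?_ (isCoboundedUnder_le_of_eventually_le atTop (x := 0) ?_)
    hlim.isBoundedUnder_le
  · filter_upwards [hf, eventually_gt_atTop 1] with θ hθ hθ₁
    rw [div_le_iff₀ (log_pos hθ₁)]
    have hlog : log θ ≠ 0 := (log_pos hθ₁).ne'
    calc f θ ≤ a * log θ + b := hθ
      _ = (a + b * (log θ)⁻¹) * log θ := by field_simp
  · filter_upwards [hf₀, eventually_gt_atTop 1] with θ hθ hθ₁
    exact div_nonneg hθ (log_pos hθ₁).le

theorem mittagLeffler_limsup (β t : ℝ) (hβ : 0 < β) (ht : 0 < t) :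
    Filter.limsup
      (fun θ : ℝ => Real.log (Real.log (mittagLeffler β (θ * t))) / Real.log θ)
      Filter.atTop ≤ 1 / β := by
  obtain ⟨C, hC⟩ := exists_log_log_mittagLeffler_le hβ
  have hθt : Tendsto (fun θ => θ * t) atTop atTop := tendsto_id.atTop_mul_const ht
  rw [one_div]
  refine limsup_div_log_le (b := β⁻¹ * log t + C)
    (hθt.eventually (log_log_mittagLeffler_nonneg hβ)) ?_
  filter_upwards [hθt.eventually hC, eventually_gt_atTop 0] with θ hθ hθ₀
  rw [log_mul hθ₀.ne' ht.ne'] at hθ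
  linarith
end

section
/- Fix ρ > 0 and t > 0, and define S(u) := Σ_{k=1}^∞ (u / k^ρ)^k for u > 0. Then liminf_{θ → ∞} (log log S(θ t)) / (log θ) ≥ 1/ρ. -/
/-!
With `y = (2u)^{1/ρ} / (k+1)`, the `k`-th term times `2^{k+1}` equals `y^{ρ(k+1)} ≤ e^{ρ(k+1)y} = e^{ρ(2u)^{1/ρ}}`,
so `log S(u) ≤ ρ (2u)^{1/ρ}`. Conversely the single term with `k + 1 ≈ (u/e)^{1/ρ}` is at least `e^{k+1}`,
so `log S(u) ≥ (u/e)^{1/ρ} / 2`. Hence `log log S(u) = (1/ρ) log u + O(1)`, and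
`log log S(θt) / log θ` in fact tends to `1/ρ`.
-/

open Filter Real Asymptotics Topology

theorem tendsto_comp_mul_div_log {g : ℝ → ℝ} {a t : ℝ} (ht : 0 < t)
    (hg : (fun u => g u - a * log u) =O[atTop] (fun _ => (1 : ℝ))) :
    Tendsto (fun θ => g (θ * t) / log θ) atTop (𝓝 a) := by
  have htop : Tendsto (fun θ : ℝ => θ * t) atTop atTop := tendsto_id.atTop_mul_const ht
  have hnum : (fun θ => a * log t + (g (θ * t) - a * log (θ * t))) =O[atTop] (fun _ => (1 : ℝ)) :=
    (isBigO_const_const _ one_ne_zero _).add (hg.comp_tendsto htop)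
  have hrem : Tendsto (fun θ => (a * log t + (g (θ * t) - a * log (θ * t))) / log θ) atTop (𝓝 0) := by
    have hprod := hnum.mul (isBigO_refl (fun θ => (log θ)⁻¹) atTop)
    simp only [one_mul] at hprod
    simpa only [div_eq_mul_inv] using hprod.trans_tendsto tendsto_log_atTop.inv_tendsto_atTop
  have hlim := hrem.const_add a
  rw [add_zero] at hlim
  refine hlim.congr' ?_
  filter_upwards [eventually_gt_atTop 1] with θ hθ
  have hlog : log θ ≠ 0 := (log_pos hθ).ne'
  rw [log_mul (by linarith) ht.ne']
  field_simp
  ring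

namespace SumLiminf

noncomputable def term (ρ u : ℝ) (k : ℕ) : ℝ := (u / ((k : ℝ) + 1) ^ ρ) ^ (k + 1)

-- `S ρ u` is the paper's `S(u) = ∑_{k ≥ 1} (u / k^ρ)^k`, indexed from `k = 0`.
noncomputable def S (ρ u : ℝ) : ℝ := ∑' k : ℕ, term ρ u k

variable {ρ u : ℝ}

lemma term_nonneg (hu : 0 ≤ u) (k : ℕ) : 0 ≤ term ρ u k := by
  unfold term; positivity

lemma term_le_exp (hρ : 0 < ρ) {v : ℝ} (hv : 0 ≤ v) (k : ℕ) :
    term ρ v k ≤ exp (ρ * v ^ (1 / ρ)) := by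
  set m : ℝ := (k : ℝ) + 1
  have hm : 0 < m := by positivity
  set y := v ^ (1 / ρ) / m
  have hy : 0 ≤ y := by positivity
  have hbase : v / m ^ ρ = y ^ ρ := by
    rw [div_rpow (by positivity) hm.le, ← rpow_mul hv, one_div_mul_cancel hρ.ne', rpow_one]
  have hy_exp : y ^ ρ ≤ exp (ρ * y) := by
    rw [mul_comm, exp_mul]
    exact rpow_le_rpow hy (by linarith [add_one_le_exp y]) hρ.le
  calc term ρ v k = (y ^ ρ) ^ (k + 1) := by rw [term, hbase]
    _ ≤ exp (ρ * y) ^ (k + 1) := pow_le_pow_left₀ (by positivity) hy_exp _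
    _ = exp (ρ * v ^ (1 / ρ)) := by
      rw [← exp_nat_mul]
      congr 1
      simp only [y, m]
      push_cast
      field_simp

lemma term_le_geometric (hρ : 0 < ρ) (hu : 0 ≤ u) (k : ℕ) :
    term ρ u k ≤ exp (ρ * (2 * u) ^ (1 / ρ)) / 2 / 2 ^ k := by
  have hscale : term ρ u k = term ρ (2 * u) k / 2 / 2 ^ k := by
    simp only [term, mul_div_assoc, mul_pow]
    field_simp
    ring
  rw [hscale]
  gcongr
  exact term_le_exp hρ (by positivity) k

lemma summable_term (hρ : 0 < ρ) (hu : 0 ≤ u) : Summable (term ρ u) :=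
  (summable_geometric_two' _).of_nonneg_of_le (term_nonneg hu) (term_le_geometric hρ hu)

lemma S_le_exp (hρ : 0 < ρ) (hu : 0 ≤ u) : S ρ u ≤ exp (ρ * (2 * u) ^ (1 / ρ)) :=
  calc S ρ u ≤ ∑' k : ℕ, exp (ρ * (2 * u) ^ (1 / ρ)) / 2 / 2 ^ k :=
        (summable_term hρ hu).tsum_le_tsum (term_le_geometric hρ hu) (summable_geometric_two' _)
    _ = exp (ρ * (2 * u) ^ (1 / ρ)) := tsum_geometric_two' _

lemma half_rpow_le_log_S (hρ : 0 < ρ) (hu : exp 1 ≤ u) :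
    (u / exp 1) ^ (1 / ρ) / 2 ≤ log (S ρ u) := by
  have hu0 : 0 ≤ u := (exp_pos 1).le.trans hu
  set x := (u / exp 1) ^ (1 / ρ)
  have hx : 1 ≤ x := one_le_rpow ((one_le_div (exp_pos 1)).mpr hu) (by positivity)
  set k := ⌊x - 1⌋₊
  have hk_le : (k : ℝ) + 1 ≤ x := by linarith [Nat.floor_le (sub_nonneg.mpr hx)]
  have hk_gt : x - 1 < (k : ℝ) + 1 := by linarith [Nat.lt_floor_add_one (x - 1)]
  have hbase : exp 1 ≤ u / ((k : ℝ) + 1) ^ ρ := by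
    have hxρ : x ^ ρ = u / exp 1 := by
      rw [← rpow_mul (by positivity), one_div_mul_cancel hρ.ne', rpow_one]
    have : ((k : ℝ) + 1) ^ ρ ≤ u / exp 1 := hxρ ▸ rpow_le_rpow (by positivity) hk_le hρ.le
    rw [le_div_iff₀ (by positivity)]
    rwa [le_div_iff₀ (exp_pos 1), mul_comm] at this
  have hexp_le : exp ((k : ℝ) + 1) ≤ S ρ u :=
    calc exp ((k : ℝ) + 1) = exp 1 ^ (k + 1) := by rw [← exp_nat_mul]; push_cast; ring_nf
      _ ≤ term ρ u k := pow_le_pow_left₀ (exp_pos 1).le hbase _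
      _ ≤ S ρ u := (summable_term hρ hu0).le_tsum k fun j _ => term_nonneg hu0 j
  have : (k : ℝ) + 1 ≤ log (S ρ u) := (le_log_iff_exp_le ((exp_pos _).trans_le hexp_le)).mpr hexp_le
  linarith

lemma isBigO_log_log_S_sub (hρ : 0 < ρ) :
    (fun u => log (log (S ρ u)) - 1 / ρ * log u) =O[atTop] (fun _ => (1 : ℝ)) := by
  refine .of_bound (1 / ρ + log 2 + |log ρ| + 1 / ρ * log 2) ?_
  filter_upwards [eventually_ge_atTop (exp 1)] with u hu
  have hu0 : 0 < u := (exp_pos 1).trans_le hu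
  have hlow := half_rpow_le_log_S hρ hu
  have hlog_low : log ((u / exp 1) ^ (1 / ρ) / 2) = 1 / ρ * (log u - 1) - log 2 := by
    rw [log_div (by positivity) two_ne_zero, log_rpow (by positivity), log_div hu0.ne' (exp_ne_zero 1),
      log_exp]
  have hlog_high : log (ρ * (2 * u) ^ (1 / ρ)) = log ρ + 1 / ρ * (log 2 + log u) := by
    rw [log_mul hρ.ne' (by positivity), log_rpow (by positivity), log_mul two_ne_zero hu0.ne']
  have hge : 1 / ρ * (log u - 1) - log 2 ≤ log (log (S ρ u)) :=
    hlog_low ▸ log_le_log (by positivity) hlow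
  have hlogS_pos : 0 < log (S ρ u) := (by positivity : (0 : ℝ) < _).trans_le hlow
  have hS_pos : 0 < S ρ u :=
    zero_lt_one.trans ((log_pos_iff (tsum_nonneg (term_nonneg hu0.le))).mp hlogS_pos)
  have hle : log (log (S ρ u)) ≤ log ρ + 1 / ρ * (log 2 + log u) := by
    rw [← hlog_high, ← log_exp (ρ * _)]
    exact log_le_log hlogS_pos (log_le_log hS_pos (S_le_exp hρ hu0.le))
  have h2 : 0 ≤ log 2 := log_nonneg one_le_two
  rw [norm_one, mul_one, Real.norm_eq_abs, abs_le]
  have h2ρ : 0 ≤ 1 / ρ * log 2 := mul_nonneg (one_div_pos.mpr hρ).le h2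
  constructor <;> linarith [le_abs_self (log ρ), neg_abs_le (log ρ), one_div_pos.mpr hρ]

end SumLiminf

theorem sum_liminf (ρ t : ℝ) (hρ : 0 < ρ) (ht : 0 < t) :
    1 / ρ ≤ Filter.liminf
      (fun θ : ℝ =>
        Real.log (Real.log (∑' k : ℕ, (θ * t / ((k : ℝ) + 1) ^ ρ) ^ (k + 1))) / Real.log θ)
      Filter.atTop :=
  ((tendsto_comp_mul_div_log ht (SumLiminf.isBigO_log_log_S_sub hρ)).liminf_eq).ge
end

section
/- Let β > 0, κ > 0, t > 0 and let f : [0,t] → ℝ be a nonnegative integrable function. Then lim_{n → ∞} ((κ Γ(β))^n / Γ(nβ)) ∫₀ᵗ (t−s)^{nβ−1} f(s) ds = 0, where Γ is the real Gamma function. -/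
/-!
Bounding the kernel `(t - s) ^ (nβ - 1)` by `t ^ (nβ - 1)` reduces the claim to
`(|κ Γ(β)| t ^ β) ^ n / Γ(nβ) → 0`, an instance of `B ^ x / Γ(x) → 0` as `x → ∞`. The latter holds
because `Γ` is monotone on `[2, ∞)`, so `Γ(x) ≥ Γ(⌊x⌋) = (⌊x⌋ - 1)!`, and `B ^ k / k! → 0`.
-/

open MeasureTheory Filter Topology
open scoped Nat

namespace Real

theorem factorial_le_Gamma_of_natCast_add_one_le {n : ℕ} {x : ℝ} (hn : 1 ≤ n)
    (hx : (n : ℝ) + 1 ≤ x) : (n ! : ℝ) ≤ Gamma x := by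
  have h2 : (2 : ℝ) ≤ n + 1 := by
    have : (1 : ℝ) ≤ n := by exact_mod_cast hn
    linarith
  rw [← Gamma_nat_eq_factorial]
  exact Gamma_strictMonoOn_Ici.monotoneOn h2 (h2.trans hx) hx

theorem tendsto_rpow_div_Gamma_atTop {B : ℝ} (hB : 0 ≤ B) :
    Tendsto (fun x => B ^ x / Gamma x) atTop (𝓝 0) := by
  set L := max 1 B
  have hL : 1 ≤ L := le_max_left _ _
  have hfloor : Tendsto (fun x : ℝ => ⌊x⌋₊ - 1) atTop atTop :=
    (tendsto_sub_atTop_nat 1).comp tendsto_nat_floor_atTop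
  have hlim := ((FloorSemiring.tendsto_pow_div_factorial_atTop L).const_mul (L ^ 2)).comp hfloor
  rw [mul_zero] at hlim
  refine squeeze_zero' ?_ ?_ hlim
  · filter_upwards [eventually_gt_atTop 0] with x hx
    exact div_nonneg (rpow_nonneg hB x) (Gamma_pos_of_pos hx).le
  filter_upwards [eventually_ge_atTop 2] with x hx
  set k := ⌊x⌋₊ - 1
  have hk : 1 ≤ k := by
    have : 2 ≤ ⌊x⌋₊ := Nat.le_floor (by exact_mod_cast hx)
    omega
  have hk_succ : ((k + 1 : ℕ) : ℝ) = ⌊x⌋₊ := by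
    rw [Nat.sub_add_cancel (by omega : 1 ≤ ⌊x⌋₊)]
  have hkx : (k : ℝ) + 1 ≤ x := by
    rw [← Nat.cast_add_one, hk_succ]
    exact Nat.floor_le (by linarith)
  have hxk : x ≤ ((k + 2 : ℕ) : ℝ) := by
    rw [show k + 2 = k + 1 + 1 from rfl, Nat.cast_add_one, hk_succ]
    exact (Nat.lt_floor_add_one x).le
  have hpow : B ^ x ≤ L ^ (k + 2) :=
    calc B ^ x ≤ L ^ x := rpow_le_rpow hB (le_max_right _ _) (by linarith)
      _ ≤ L ^ ((k + 2 : ℕ) : ℝ) := rpow_le_rpow_of_exponent_le hL hxk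
      _ = L ^ (k + 2) := rpow_natCast L (k + 2)
  calc B ^ x / Gamma x ≤ L ^ (k + 2) / (k ! : ℝ) :=
        div_le_div₀ (by positivity) hpow (by positivity)
          (factorial_le_Gamma_of_natCast_add_one_le hk hkx)
    _ = L ^ 2 * (L ^ k / k !) := by ring

end Real

theorem tendsto_pow_div_Gamma_natCast_mul_atTop (A : ℝ) {β : ℝ} (hβ : 0 < β) :
    Tendsto (fun n : ℕ => A ^ n / Real.Gamma (n * β)) atTop (𝓝 0) := by
  rw [tendsto_zero_iff_norm_tendsto_zero]
  have hnβ : Tendsto (fun n : ℕ => (n : ℝ) * β) atTop atTop :=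
    tendsto_natCast_atTop_atTop.atTop_mul_const hβ
  refine ((Real.tendsto_rpow_div_Gamma_atTop (B := |A| ^ β⁻¹) (by positivity)).comp hnβ).congr
    fun n => ?_
  have hΓ : 0 ≤ Real.Gamma (n * β) := Real.Gamma_nonneg_of_nonneg (by positivity)
  rw [Function.comp_apply, norm_div, norm_pow, Real.norm_eq_abs, Real.norm_eq_abs,
    abs_of_nonneg hΓ, ← Real.rpow_mul (abs_nonneg A), mul_comm (n : ℝ),
    inv_mul_cancel_left₀ hβ.ne', Real.rpow_natCast]

theorem norm_intervalIntegral_rpow_sub_mul_le {t p : ℝ} (ht : 0 ≤ t) (hp : 0 ≤ p) {f : ℝ → ℝ}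
    (hf : IntegrableOn f (Set.Ioc 0 t)) :
    ‖∫ s in (0 : ℝ)..t, (t - s) ^ p * f s‖ ≤ t ^ p * ∫ s in (0 : ℝ)..t, |f s| := by
  rw [← intervalIntegral.integral_const_mul]
  refine intervalIntegral.norm_integral_le_of_norm_le ht (.of_forall fun s hs => ?_)
    ((intervalIntegrable_iff_integrableOn_Ioc_of_le ht).2 (hf.norm.const_mul _))
  have hts : 0 ≤ t - s := sub_nonneg.2 hs.2
  rw [norm_mul, Real.norm_eq_abs, Real.norm_eq_abs, abs_of_nonneg (Real.rpow_nonneg hts p)]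
  gcongr
  exact sub_le_self t hs.1.le

theorem iterated_kernel_tendsto_zero_general (β κ t : ℝ) (hβ : 0 < β) (ht : 0 < t)
    (f : ℝ → ℝ) (hf : IntegrableOn f (Set.Icc (0 : ℝ) t)) :
    Filter.Tendsto
      (fun n : ℕ => (κ * Real.Gamma β) ^ n / Real.Gamma (n * β)
        * ∫ s in (0 : ℝ)..t, (t - s) ^ ((n : ℝ) * β - 1) * f s)
      Filter.atTop (nhds 0) := by
  set K := κ * Real.Gamma β
  set M := ∫ s in (0 : ℝ)..t, |f s|
  have hlim := (tendsto_pow_div_Gamma_natCast_mul_atTop (|K| * t ^ β) hβ).mul_const (M / t)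
  rw [zero_mul] at hlim
  refine squeeze_zero_norm' ?_ hlim
  have hnβ : ∀ᶠ n : ℕ in atTop, 1 ≤ (n : ℝ) * β :=
    (tendsto_natCast_atTop_atTop.atTop_mul_const hβ).eventually_ge_atTop 1
  filter_upwards [hnβ] with n hn
  have hkernel := norm_intervalIntegral_rpow_sub_mul_le ht.le (sub_nonneg.2 hn)
    (hf.mono_set Set.Ioc_subset_Icc_self)
  have hΓ : 0 ≤ Real.Gamma (n * β) := Real.Gamma_nonneg_of_nonneg (by positivity)
  calc ‖K ^ n / Real.Gamma (n * β) * ∫ s in (0 : ℝ)..t, (t - s) ^ ((n : ℝ) * β - 1) * f s‖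
      ≤ |K| ^ n / Real.Gamma (n * β) * (t ^ ((n : ℝ) * β - 1) * M) := by
        rw [norm_mul, norm_div, norm_pow, Real.norm_eq_abs, Real.norm_eq_abs, abs_of_nonneg hΓ]
        gcongr
    _ = (|K| * t ^ β) ^ n / Real.Gamma (n * β) * (M / t) := by
        rw [Real.rpow_sub ht, Real.rpow_one, mul_pow, ← Real.rpow_natCast (t ^ β),
          ← Real.rpow_mul ht.le, mul_comm β]
        ring

theorem iterated_kernel_tendsto_zero (β κ t : ℝ) (hβ : 0 < β) (hκ : 0 < κ) (ht : 0 < t)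
    (f : ℝ → ℝ) (hf_nonneg : ∀ s ∈ Set.Icc (0 : ℝ) t, 0 ≤ f s)
    (hf : IntegrableOn f (Set.Icc (0 : ℝ) t)) :
    Filter.Tendsto
      (fun n : ℕ => (κ * Real.Gamma β) ^ n / Real.Gamma (n * β)
        * ∫ s in (0 : ℝ)..t, (t - s) ^ ((n : ℝ) * β - 1) * f s)
      Filter.atTop (nhds 0) :=
  iterated_kernel_tendsto_zero_general β κ t hβ ht f hf
end

section
/- Let β > 0, T > 0, κ > 0 and c₁ > 0, and suppose f : [0,T] → ℝ is nonnegative, integrable, and satisfies f(t) ≤ c₁ + κ ∫₀ᵗ (t−s)^{β−1} f(s) ds for all t ∈ [0,T]. Then for every integer n ≥ 1 and every t ∈ [0,T], f(t) ≤ c₁ Σ_{k=0}^{n−1} (κ Γ(β))^k t^{kβ} / Γ(kβ + 1) + ((κ Γ(β))^n / Γ(nβ)) ∫₀ᵗ (t−s)^{nβ−1} f(s) ds, where Γ is the real Gamma function. -/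
/-!
Let `k_a(x) = x^(a-1) / Γ(a)` for `x > 0` (and `0` otherwise), so that the Riemann–Liouville
integral of order `a` is convolution with `k_a`. The Beta integral gives `k_a ⋆ k_b = k_(a+b)`.
With `F` the function `f` on `(0, T]` extended by zero, the hypothesis reads
`F ≤ c₁ k_1 + κ Γ(β) F ⋆ k_β`; convolving it with `k_(nβ)` and using associativity gives the
induction step, and `k_(kβ+1)(t) = t^(kβ) / Γ(kβ+1)` produces the terms of the sum.

Everything is done with `ℝ≥0∞`-valued lower integrals, where Tonelli needs no integrability.
Back in `ℝ`, an integral that diverges is `0` by convention; if this happens for the order `nβ`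
it happens for the order `β` (since `k_(nβ) ≤ C k_β` on `(0, T]`), and then the hypothesis
already gives `f t ≤ c₁`.
-/

open MeasureTheory Set ProbabilityTheory
open scoped ENNReal

section LConvolution

variable {G : Type*} [MeasurableSpace G] [Add G] [Neg G] {μ : Measure G}
  {f f' g : G → ℝ≥0∞}

theorem lconvolution_mono_left (h : f ≤ f') : f ⋆ₗ[μ] g ≤ f' ⋆ₗ[μ] g := fun _ =>
  lintegral_mono fun y => mul_le_mul_left (h y) _

theorem add_lconvolution [MeasurableAdd G] [MeasurableNeg G] (hf : Measurable f)
    (hg : Measurable g) : (f + f') ⋆ₗ[μ] g = f ⋆ₗ[μ] g + f' ⋆ₗ[μ] g := by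
  ext x
  simp only [lconvolution_def, Pi.add_apply, add_mul]
  exact lintegral_add_left (hf.mul (hg.comp (measurable_neg.add_const x))) _

theorem smul_lconvolution {c : ℝ≥0∞} (hc : c ≠ ∞) :
    (c • f) ⋆ₗ[μ] g = c • (f ⋆ₗ[μ] g) := by
  ext x
  simp only [lconvolution_def, Pi.smul_apply, smul_eq_mul, mul_assoc]
  exact lintegral_const_mul' _ _ hc

end LConvolution

lemma lintegral_Ioo_rpow_mul_one_sub_rpow {a b : ℝ} (ha : 0 < a) (hb : 0 < b) :
    ∫⁻ z in Ioo (0 : ℝ) 1, ENNReal.ofReal (z ^ (a - 1) * (1 - z) ^ (b - 1))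
      = ENNReal.ofReal (beta a b) := by
  have h := lintegral_betaPDF_eq_one ha hb
  simp_rw [lintegral_betaPDF, mul_assoc,
    ENNReal.ofReal_mul (one_div_pos.2 (beta_pos ha hb)).le] at h
  rw [lintegral_const_mul' _ _ ENNReal.ofReal_ne_top, mul_comm] at h
  rw [ENNReal.eq_inv_of_mul_eq_one_left h, one_div, ENNReal.ofReal_inv_of_pos (beta_pos ha hb),
    inv_inv]

lemma lintegral_Ioo_rpow_mul_sub_rpow {a b x : ℝ} (ha : 0 < a) (hb : 0 < b) (hx : 0 < x) :
    ∫⁻ y in Ioo 0 x, ENNReal.ofReal (y ^ (a - 1) * (x - y) ^ (b - 1))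
      = ENNReal.ofReal (x ^ (a + b - 1) * beta a b) := by
  have himage : (x * ·) '' Ioo (0 : ℝ) 1 = Ioo 0 x := by simp [image_mul_left_Ioo hx]
  rw [← himage, lintegral_image_eq_lintegral_abs_deriv_mul (f := (x * ·)) measurableSet_Ioo
    (fun z _ => ((hasDerivAt_id' z).const_mul x).hasDerivWithinAt)
    (mul_right_injective₀ hx.ne').injOn]
  calc ∫⁻ z in Ioo 0 1, ENNReal.ofReal |x * 1|
          * ENNReal.ofReal ((x * z) ^ (a - 1) * (x - x * z) ^ (b - 1))
      = ∫⁻ z in Ioo 0 1, ENNReal.ofReal (x ^ (a + b - 1))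
          * ENNReal.ofReal (z ^ (a - 1) * (1 - z) ^ (b - 1)) := by
        refine setLIntegral_congr_fun measurableSet_Ioo fun z hz => ?_
        have hpow : x ^ (a + b - 1) = x * x ^ (a - 1) * x ^ (b - 1) := by
          rw [← Real.rpow_one_add' hx.le (by linarith), ← Real.rpow_add hx]; ring_nf
        rw [mul_one, abs_of_pos hx, ← ENNReal.ofReal_mul hx.le,
          ← ENNReal.ofReal_mul (by positivity), show x - x * z = x * (1 - z) by ring,
          Real.mul_rpow hx.le hz.1.le, Real.mul_rpow hx.le (by linarith [hz.2]), hpow]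
        ring_nf
    _ = _ := by
        rw [lintegral_const_mul' _ _ ENNReal.ofReal_ne_top,
          lintegral_Ioo_rpow_mul_one_sub_rpow ha hb, ← ENNReal.ofReal_mul (by positivity)]

/-- The Riemann–Liouville kernel: convolution with `rlKernel a` is fractional integration of
order `a`. -/
noncomputable def rlKernel (a : ℝ) : ℝ → ℝ≥0∞ :=
  (Ioi 0).indicator fun x => ENNReal.ofReal (x ^ (a - 1) / Real.Gamma a)

@[fun_prop]
lemma measurable_rlKernel (a : ℝ) : Measurable (rlKernel a) :=
  Measurable.indicator (by fun_prop) measurableSet_Ioi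

lemma rlKernel_of_nonpos {a x : ℝ} (hx : x ≤ 0) : rlKernel a x = 0 :=
  indicator_of_notMem (not_lt.2 hx) _

lemma rlKernel_of_pos {a x : ℝ} (hx : 0 < x) :
    rlKernel a x = ENNReal.ofReal (x ^ (a - 1) / Real.Gamma a) :=
  indicator_of_mem hx _

lemma rlKernel_mul_rlKernel_sub {a b : ℝ} (ha : 0 < a) (x y : ℝ) :
    rlKernel a y * rlKernel b (-y + x) = (Ioo 0 x).indicator
      (fun y => ENNReal.ofReal (y ^ (a - 1) * (x - y) ^ (b - 1))
        * ENNReal.ofReal (Real.Gamma a * Real.Gamma b)⁻¹) y := by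
  by_cases hy : y ∈ Ioo 0 x
  · have hxy : 0 < x - y := sub_pos.2 hy.2
    rw [indicator_of_mem hy, rlKernel_of_pos hy.1, neg_add_eq_sub, rlKernel_of_pos hxy,
      ← ENNReal.ofReal_mul
        (div_nonneg (Real.rpow_nonneg hy.1.le _) (Real.Gamma_pos_of_pos ha).le),
      ← ENNReal.ofReal_mul (mul_nonneg (Real.rpow_nonneg hy.1.le _) (Real.rpow_nonneg hxy.le _))]
    congr 1
    ring
  · rw [indicator_of_notMem hy]
    rcases not_and_or.1 hy with hy | hy
    · rw [rlKernel_of_nonpos (not_lt.1 hy), zero_mul]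
    · rw [rlKernel_of_nonpos (x := -y + x) (by linarith [not_lt.1 hy]), mul_zero]

theorem rlKernel_lconvolution {a b : ℝ} (ha : 0 < a) (hb : 0 < b) :
    rlKernel a ⋆ₗ rlKernel b = rlKernel (a + b) := by
  ext x
  rw [lconvolution_def]
  simp_rw [rlKernel_mul_rlKernel_sub ha]
  rcases le_or_gt x 0 with hx | hx
  · simp [Ioo_eq_empty_of_le hx, rlKernel_of_nonpos hx]
  · rw [lintegral_indicator measurableSet_Ioo, lintegral_mul_const' _ _ ENNReal.ofReal_ne_top,
      lintegral_Ioo_rpow_mul_sub_rpow ha hb hx,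
      ← ENNReal.ofReal_mul (mul_nonneg (Real.rpow_nonneg hx.le _) (beta_pos ha hb).le),
      rlKernel_of_pos hx, beta]
    have := Real.Gamma_pos_of_pos ha
    have := Real.Gamma_pos_of_pos hb
    have := Real.Gamma_pos_of_pos (add_pos ha hb)
    congr 1
    field_simp

lemma rlKernel_le_mul_rlKernel {a b T y : ℝ} (ha : 0 < a) (hab : a ≤ b) (hy : y ≤ T) :
    rlKernel b y
      ≤ ENNReal.ofReal (T ^ (b - a) * Real.Gamma a / Real.Gamma b) * rlKernel a y := by
  rcases le_or_gt y 0 with hy0 | hy0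
  · simp [rlKernel_of_nonpos hy0]
  have hT : 0 < T := hy0.trans_le hy
  have hΓa := Real.Gamma_pos_of_pos ha
  have hΓb := Real.Gamma_pos_of_pos (ha.trans_le hab)
  have hsplit : y ^ (b - 1) = y ^ (b - a) * y ^ (a - 1) := by
    rw [← Real.rpow_add hy0]; ring_nf
  have hpow : y ^ (b - a) ≤ T ^ (b - a) := Real.rpow_le_rpow hy0.le hy (sub_nonneg.2 hab)
  rw [rlKernel_of_pos hy0, rlKernel_of_pos hy0, ← ENNReal.ofReal_mul (by positivity)]
  refine ENNReal.ofReal_le_ofReal ?_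
  calc y ^ (b - 1) / Real.Gamma b = y ^ (b - a) * y ^ (a - 1) / Real.Gamma b := by rw [hsplit]
    _ ≤ T ^ (b - a) * y ^ (a - 1) / Real.Gamma b := by gcongr
    _ = _ := by field_simp

theorem lconvolution_rlKernel_le_mul {a b T t : ℝ} (ha : 0 < a) (hab : a ≤ b) (ht : t ≤ T)
    {g : ℝ → ℝ≥0∞} (hg : ∀ s ≤ 0, g s = 0) :
    (g ⋆ₗ rlKernel b) t
      ≤ ENNReal.ofReal (T ^ (b - a) * Real.Gamma a / Real.Gamma b) * (g ⋆ₗ rlKernel a) t := by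
  simp only [lconvolution_def]
  rw [← lintegral_const_mul' _ _ ENNReal.ofReal_ne_top]
  refine lintegral_mono fun s => ?_
  rcases le_or_gt s 0 with hs | hs
  · simp [hg s hs]
  · rw [mul_left_comm]
    gcongr
    exact rlKernel_le_mul_rlKernel ha hab (by linarith)

theorem le_sum_rlKernel_add_lconvolution {β : ℝ} (hβ : 0 < β) {c L : ℝ≥0∞} (hc : c ≠ ∞)
    (hL : L ≠ ∞) {g : ℝ → ℝ≥0∞} (hg : AEMeasurable g)
    (h : g ≤ c • rlKernel 1 + L • (g ⋆ₗ rlKernel β)) (n : ℕ) (hn : 1 ≤ n) :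
    g ≤ ∑ k ∈ Finset.range n, (c * L ^ k) • rlKernel (k * β + 1)
      + L ^ n • (g ⋆ₗ rlKernel (n * β)) := by
  induction n, hn using Nat.le_induction with
  | base => simpa using h
  | succ n hn ih =>
    have hnβ : 0 < (n : ℝ) * β := by positivity
    have hstep : g ⋆ₗ rlKernel (n * β)
        ≤ c • rlKernel (n * β + 1) + L • (g ⋆ₗ rlKernel ((n + 1 : ℕ) * β)) :=
      calc g ⋆ₗ rlKernel (n * β)
          ≤ (c • rlKernel 1 + L • (g ⋆ₗ rlKernel β)) ⋆ₗ rlKernel (n * β) :=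
            lconvolution_mono_left h
        _ = c • (rlKernel 1 ⋆ₗ rlKernel (n * β))
              + L • (g ⋆ₗ rlKernel β ⋆ₗ rlKernel (n * β)) := by
            rw [add_lconvolution (by fun_prop) (by fun_prop), smul_lconvolution hc,
              smul_lconvolution hL, lconvolution_assoc₀ hg (by fun_prop) (by fun_prop)]
        _ = _ := by
            rw [rlKernel_lconvolution one_pos hnβ, rlKernel_lconvolution hβ hnβ, add_comm 1]
            push_cast
            ring_nf
    calc g ≤ ∑ k ∈ Finset.range n, (c * L ^ k) • rlKernel (k * β + 1)
          + L ^ n • (g ⋆ₗ rlKernel (n * β)) := ih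
      _ ≤ ∑ k ∈ Finset.range n, (c * L ^ k) • rlKernel (k * β + 1)
          + L ^ n • (c • rlKernel (n * β + 1) + L • (g ⋆ₗ rlKernel ((n + 1 : ℕ) * β))) := by
        gcongr
      _ = _ := by
        rw [Finset.sum_range_succ, smul_add, smul_smul, smul_smul, add_assoc, mul_comm, pow_succ]

noncomputable def indicatorIoc (T : ℝ) (f : ℝ → ℝ) : ℝ → ℝ≥0∞ :=
  (Ioc 0 T).indicator fun s => ENNReal.ofReal (f s)

section IndicatorIoc

variable {f : ℝ → ℝ} {T : ℝ}

lemma indicatorIoc_of_mem {t : ℝ} (ht : t ∈ Ioc 0 T) :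
    indicatorIoc T f t = ENNReal.ofReal (f t) :=
  indicator_of_mem ht _

lemma indicatorIoc_of_notMem {t : ℝ} (ht : t ∉ Ioc 0 T) : indicatorIoc T f t = 0 :=
  indicator_of_notMem ht _

lemma indicatorIoc_lconvolution_rlKernel {a t : ℝ} (ha : 0 < a) (ht : t ≤ T) :
    (indicatorIoc T f ⋆ₗ rlKernel a) t
      = ∫⁻ s in Ioo 0 t, ENNReal.ofReal ((Real.Gamma a)⁻¹ * ((t - s) ^ (a - 1) * f s)) := by
  rw [lconvolution_def, ← lintegral_indicator measurableSet_Ioo]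
  congr 1
  ext s
  by_cases hs : s ∈ Ioo 0 t
  · have hts : 0 < t - s := sub_pos.2 hs.2
    rw [indicator_of_mem hs, indicatorIoc_of_mem ⟨hs.1, hs.2.le.trans ht⟩, neg_add_eq_sub,
      rlKernel_of_pos hts, mul_comm,
      ← ENNReal.ofReal_mul (div_nonneg (by positivity) (Real.Gamma_pos_of_pos ha).le)]
    congr 1
    ring
  · rw [indicator_of_notMem hs]
    rcases not_and_or.1 hs with hs | hs
    · rw [indicatorIoc_of_notMem fun h => hs h.1, zero_mul]
    · rw [rlKernel_of_nonpos (by linarith [not_lt.1 hs]), mul_zero]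

theorem intervalIntegral_eq_Gamma_mul_toReal_lconvolution {a t : ℝ} (ha : 0 < a)
    (ht : t ∈ Icc 0 T) (hf0 : ∀ s ∈ Ioc 0 T, 0 ≤ f s)
    (hfm : AEStronglyMeasurable f (volume.restrict (Ioc 0 T))) :
    ∫ s in 0..t, (t - s) ^ (a - 1) * f s
      = Real.Gamma a * ((indicatorIoc T f ⋆ₗ rlKernel a) t).toReal := by
  have hsub : Ioo 0 t ⊆ Ioc 0 T := fun s hs => ⟨hs.1, hs.2.le.trans ht.2⟩
  rw [indicatorIoc_lconvolution_rlKernel ha ht.2, ← integral_eq_lintegral_of_nonneg_ae,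
    integral_const_mul, ← mul_assoc, mul_inv_cancel₀ (Real.Gamma_pos_of_pos ha).ne', one_mul,
    intervalIntegral.integral_of_le ht.1, integral_Ioc_eq_integral_Ioo]
  · filter_upwards [ae_restrict_mem measurableSet_Ioo] with s hs
    have := hf0 s (hsub hs)
    have := (sub_pos.2 hs.2).le
    positivity
  · have hk : Measurable fun s => (Real.Gamma a)⁻¹ * (t - s) ^ (a - 1) := by fun_prop
    exact (hk.aestronglyMeasurable.mul (hfm.mono_measure (Measure.restrict_mono hsub le_rfl))).congr
      (ae_of_all _ fun s => by simp only [Pi.mul_apply]; ring)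

theorem indicatorIoc_le_of_renewal {β κ c₁ : ℝ} (hβ : 0 < β) (hκ : 0 ≤ κ)
    (hf0 : ∀ s ∈ Ioc 0 T, 0 ≤ f s) (hfm : AEStronglyMeasurable f (volume.restrict (Ioc 0 T)))
    (hf : ∀ t ∈ Ioc 0 T, f t ≤ c₁ + κ * ∫ s in 0..t, (t - s) ^ (β - 1) * f s) :
    indicatorIoc T f ≤ ENNReal.ofReal c₁ • rlKernel 1
      + ENNReal.ofReal (κ * Real.Gamma β) • (indicatorIoc T f ⋆ₗ rlKernel β) := by
  intro t
  by_cases ht : t ∈ Ioc 0 T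
  · have hk1 : rlKernel 1 t = 1 := by simp [rlKernel_of_pos ht.1]
    have hft := hf t ht
    rw [intervalIntegral_eq_Gamma_mul_toReal_lconvolution hβ (Ioc_subset_Icc_self ht) hf0 hfm,
      ← mul_assoc] at hft
    simp only [Pi.add_apply, Pi.smul_apply, smul_eq_mul, hk1, mul_one, indicatorIoc_of_mem ht]
    calc ENNReal.ofReal (f t)
        ≤ ENNReal.ofReal c₁ + ENNReal.ofReal (κ * Real.Gamma β)
            * ENNReal.ofReal ((indicatorIoc T f ⋆ₗ rlKernel β) t).toReal := by
          rw [← ENNReal.ofReal_mul (by positivity)]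
          exact (ENNReal.ofReal_le_ofReal hft).trans ENNReal.ofReal_add_le
      _ ≤ _ := by gcongr; exact ENNReal.ofReal_toReal_le
  · simp [indicatorIoc_of_notMem ht]

theorem le_sum_add_toReal_lconvolution {β κ c₁ : ℝ} (hβ : 0 < β) (hκ : 0 ≤ κ) (hc₁ : 0 ≤ c₁)
    (hf0 : ∀ s ∈ Ioc 0 T, 0 ≤ f s) (hfm : AEStronglyMeasurable f (volume.restrict (Ioc 0 T)))
    (hf : ∀ t ∈ Ioc 0 T, f t ≤ c₁ + κ * ∫ s in 0..t, (t - s) ^ (β - 1) * f s)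
    {n : ℕ} (hn : 1 ≤ n) {t : ℝ} (ht : t ∈ Ioc 0 T)
    (hfin : (indicatorIoc T f ⋆ₗ rlKernel (n * β)) t ≠ ∞) :
    f t ≤ c₁ * ∑ k ∈ Finset.range n,
          (κ * Real.Gamma β) ^ k * t ^ ((k : ℝ) * β) / Real.Gamma (k * β + 1)
        + (κ * Real.Gamma β) ^ n * ((indicatorIoc T f ⋆ₗ rlKernel (n * β)) t).toReal := by
  have hmeas : AEMeasurable (indicatorIoc T f) :=
    (aemeasurable_indicator_iff measurableSet_Ioc).2 hfm.aemeasurable.ennreal_ofReal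
  have key := le_sum_rlKernel_add_lconvolution hβ ENNReal.ofReal_ne_top ENNReal.ofReal_ne_top
    hmeas (indicatorIoc_le_of_renewal hβ hκ hf0 hfm hf) n hn t
  simp only [Pi.add_apply, Finset.sum_apply, Pi.smul_apply, smul_eq_mul, indicatorIoc_of_mem ht,
    rlKernel_of_pos ht.1, add_sub_cancel_right] at key
  have hpow : ∀ k : ℕ, 0 ≤ t ^ ((k : ℝ) * β) / Real.Gamma (k * β + 1) := fun k =>
    div_nonneg (Real.rpow_nonneg ht.1.le _) (Real.Gamma_pos_of_pos (by positivity)).le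
  have hterm : ∀ k : ℕ,
      0 ≤ (κ * Real.Gamma β) ^ k * t ^ ((k : ℝ) * β) / Real.Gamma (k * β + 1) := fun k => by
    rw [mul_div_assoc]; exact mul_nonneg (by positivity) (hpow k)
  have hsum := Finset.sum_nonneg fun k (_ : k ∈ Finset.range n) => hterm k
  rw [← ENNReal.ofReal_le_ofReal_iff (by positivity)]
  convert key using 1
  rw [ENNReal.ofReal_add (by positivity) (by positivity), ENNReal.ofReal_mul hc₁,
    ENNReal.ofReal_sum_of_nonneg fun k _ => hterm k, Finset.mul_sum,
    ENNReal.ofReal_mul (by positivity), ENNReal.ofReal_pow (by positivity),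
    ENNReal.ofReal_toReal hfin]
  congr 1
  refine Finset.sum_congr rfl fun k _ => ?_
  rw [mul_div_assoc, ENNReal.ofReal_mul (by positivity), ENNReal.ofReal_pow (by positivity),
    mul_assoc]

end IndicatorIoc

lemma one_le_sum_pow_mul_rpow_div_Gamma {x β t : ℝ} (hx : 0 ≤ x) (hβ : 0 ≤ β) (ht : 0 ≤ t)
    {n : ℕ} (hn : 1 ≤ n) :
    1 ≤ ∑ k ∈ Finset.range n, x ^ k * t ^ ((k : ℝ) * β) / Real.Gamma (k * β + 1) := by
  refine le_of_eq_of_le (by simp) (Finset.single_le_sum (fun k _ => ?_) (Finset.mem_range.2 hn))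
  positivity

theorem renewal_iterated_upper_general (β T κ c₁ : ℝ) (hβ : 0 < β) (hκ : 0 < κ)
    (hc₁ : 0 < c₁) (f : ℝ → ℝ)
    (hf_nonneg : ∀ t ∈ Set.Icc (0 : ℝ) T, 0 ≤ f t)
    (hf_int : IntegrableOn f (Set.Icc (0 : ℝ) T))
    (hf : ∀ t ∈ Set.Icc (0 : ℝ) T,
      f t ≤ c₁ + κ * ∫ s in (0 : ℝ)..t, (t - s) ^ (β - 1) * f s) :
    ∀ n : ℕ, 1 ≤ n → ∀ t ∈ Set.Icc (0 : ℝ) T,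
      f t ≤ c₁ * ∑ k ∈ Finset.range n,
          (κ * Real.Gamma β) ^ k * t ^ ((k : ℝ) * β) / Real.Gamma (k * β + 1)
        + (κ * Real.Gamma β) ^ n / Real.Gamma (n * β)
            * ∫ s in (0 : ℝ)..t, (t - s) ^ ((n : ℝ) * β - 1) * f s := by
  intro n hn t ht
  have hf0 : ∀ s ∈ Ioc 0 T, 0 ≤ f s := fun s hs => hf_nonneg s (Ioc_subset_Icc_self hs)
  have hfm : AEStronglyMeasurable f (volume.restrict (Ioc 0 T)) :=
    (hf_int.mono_set Ioc_subset_Icc_self).aestronglyMeasurable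
  have hnβ : 0 < (n : ℝ) * β := by positivity
  rw [intervalIntegral_eq_Gamma_mul_toReal_lconvolution hnβ ht hf0 hfm, div_mul_eq_mul_div,
    mul_div_assoc, mul_div_cancel_left₀ _ (Real.Gamma_pos_of_pos hnβ).ne']
  by_cases hdeg : f t ≤ c₁
  · calc f t ≤ c₁ := hdeg
      _ ≤ c₁ * ∑ k ∈ Finset.range n,
          (κ * Real.Gamma β) ^ k * t ^ ((k : ℝ) * β) / Real.Gamma (k * β + 1) :=
        le_mul_of_one_le_right hc₁.le
          (one_le_sum_pow_mul_rpow_div_Gamma (by positivity) hβ.le ht.1 hn)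
      _ ≤ _ := le_add_of_nonneg_right (by positivity)
  have htpos : 0 < t := ht.1.lt_of_ne fun h0 => hdeg (by subst h0; simpa using hf 0 ht)
  have hfinβ : (indicatorIoc T f ⋆ₗ rlKernel β) t ≠ ∞ := fun htop => hdeg (by
    simpa [intervalIntegral_eq_Gamma_mul_toReal_lconvolution hβ ht hf0 hfm, htop] using hf t ht)
  have hfin := ne_top_of_le_ne_top (ENNReal.mul_ne_top ENNReal.ofReal_ne_top hfinβ)
    (lconvolution_rlKernel_le_mul hβ (le_mul_of_one_le_left hβ.le (Nat.one_le_cast.2 hn)) ht.2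
      fun s hs => indicatorIoc_of_notMem fun h => hs.not_gt h.1)
  exact le_sum_add_toReal_lconvolution hβ hκ.le hc₁.le hf0 hfm
    (fun s hs => hf s (Ioc_subset_Icc_self hs)) hn ⟨htpos, ht.2⟩ hfin

theorem renewal_iterated_upper (β T κ c₁ : ℝ) (hβ : 0 < β) (hT : 0 < T) (hκ : 0 < κ)
    (hc₁ : 0 < c₁) (f : ℝ → ℝ)
    (hf_nonneg : ∀ t ∈ Set.Icc (0 : ℝ) T, 0 ≤ f t)
    (hf_int : IntegrableOn f (Set.Icc (0 : ℝ) T))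
    (hf : ∀ t ∈ Set.Icc (0 : ℝ) T,
      f t ≤ c₁ + κ * ∫ s in (0 : ℝ)..t, (t - s) ^ (β - 1) * f s) :
    ∀ n : ℕ, 1 ≤ n → ∀ t ∈ Set.Icc (0 : ℝ) T,
      f t ≤ c₁ * ∑ k ∈ Finset.range n,
          (κ * Real.Gamma β) ^ k * t ^ ((k : ℝ) * β) / Real.Gamma (k * β + 1)
        + (κ * Real.Gamma β) ^ n / Real.Gamma (n * β)
            * ∫ s in (0 : ℝ)..t, (t - s) ^ ((n : ℝ) * β - 1) * f s :=
  renewal_iterated_upper_general β T κ c₁ hβ hκ hc₁ f hf_nonneg hf_int hf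
end
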